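/- arXiv:1703.08085 — 4 statements merged into one kernel-verified Lean document; each statement's English description precedes it below -/
import Mathlib

section
/- In the d-Type Specialization Model, fix two distinct workers a and b with (fixed) types w_a, w_b ∈ {1,…,d}, and let i be a task whose type t_i is uniform on {1,…,d} and whose responses M_ia, M_ib are generated by the model independently given the types. If w_a = w_b, then P(M_ia = M_ib) = 1/2 + (2p-1)²/(2d); if w_a ≠ w_b, then P(M_ia = M_ib) = 1/2. -/
/-!
Conditioning on the task type `z`, the two responses are independent and correct with
probabilities `q_a, q_b`, so they agree with probability
`q_a q_b + (1 - q_a)(1 - q_b) = 1/2 + (2 q_a - 1)(2 q_b - 1)/2`.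
The bias `2 q - 1` vanishes unless the worker is specialised in `z`, in which case it is `2p - 1`;
averaging over `z` leaves the extra term `(2p - 1)²/(2d)` exactly when `wa = wb`.
-/

open MeasureTheory

namespace MeasureTheory

variable {Ω : Type*} [MeasurableSpace Ω]

/-- No measurability is needed: `μ A + μ Aᶜ ≥ μ univ` holds for every set by subadditivity. -/
theorem measure_eq_of_le_of_measure_compl_le {μ : Measure Ω} [IsFiniteMeasure μ] {A : Set Ω}
    {a b : ENNReal} (ha : μ A ≤ a) (hb : μ Aᶜ ≤ b) (hab : a + b ≤ μ Set.univ) : μ A = a := by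
  have hb_ne_top : b ≠ ⊤ := ne_top_of_le_ne_top (measure_ne_top μ _) (le_add_self.trans hab)
  refine le_antisymm ha ((ENNReal.add_le_add_iff_right hb_ne_top).1 ?_)
  calc a + b ≤ μ Set.univ := hab
    _ ≤ μ A + μ Aᶜ := by simpa using measure_union_le (μ := μ) A Aᶜ
    _ ≤ μ A + b := by gcongr

end MeasureTheory

section JointLaw

variable {Ω : Type*} [MeasurableSpace Ω]

def jointCell {ι : Type*} (X : Ω → ι) (A B : Ω → Prop) (z : ι) (sa sb : Bool) : Set Ω :=
  {ω | X ω = z ∧ A ω = sa ∧ B ω = sb}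

theorem measure_setOf_iff_eq_sum {ι : Type*} [Fintype ι] (μ : Measure Ω) [IsProbabilityMeasure μ]
    (X : Ω → ι) (A B : Ω → Prop) (π : ι → Bool → Bool → ℝ) (hπ_nonneg : ∀ z sa sb, 0 ≤ π z sa sb)
    (hπ_sum : ∑ z, ∑ sa, ∑ sb, π z sa sb = 1)
    (hlaw : ∀ z sa sb, μ (jointCell X A B z sa sb) = ENNReal.ofReal (π z sa sb)) :
    μ {ω | A ω ↔ B ω} = ENNReal.ofReal (∑ z, ∑ s, π z s s) := by
  classical
  have hcover (f : Bool → Bool) : {ω | B ω ↔ f (decide (A ω))} ⊆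
      ⋃ z, ⋃ s, jointCell X A B z s (f s) := by
    intro ω hω
    simp only [Set.mem_iUnion]
    exact ⟨X ω, decide (A ω), by simpa [jointCell] using hω⟩
  have hcover_le (f : Bool → Bool) : μ {ω | B ω ↔ f (decide (A ω))} ≤
      ∑ z, ∑ s, μ (jointCell X A B z s (f s)) :=
    (measure_mono (hcover f)).trans <| (measure_iUnion_fintype_le _ _).trans <|
      Finset.sum_le_sum fun _ _ => measure_iUnion_fintype_le _ _
  have hsum_ofReal (f : Bool → Bool) : ∑ z, ∑ s, μ (jointCell X A B z s (f s)) =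
      ENNReal.ofReal (∑ z, ∑ s, π z s (f s)) := by
    simp only [hlaw, ← Fintype.sum_prod_type']
    exact (ENNReal.ofReal_sum_of_nonneg fun _ _ => hπ_nonneg _ _ _).symm
  have hsum_nonneg (f : Bool → Bool) : 0 ≤ ∑ z, ∑ s, π z s (f s) :=
    Finset.sum_nonneg fun _ _ => Finset.sum_nonneg fun _ _ => hπ_nonneg _ _ _
  refine measure_eq_of_le_of_measure_compl_le (b := ENNReal.ofReal (∑ z, ∑ s, π z s (!s)))
    ?_ ?_ ?_
  · calc μ {ω | A ω ↔ B ω} = μ {ω | B ω ↔ id (decide (A ω))} := by simp [iff_comm]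
      _ ≤ _ := hcover_le id
      _ = _ := hsum_ofReal id
  · calc μ {ω | A ω ↔ B ω}ᶜ = μ {ω | B ω ↔ !(decide (A ω))} := by
          simp [Set.compl_ofPred, iff_comm, not_iff]
      _ ≤ _ := hcover_le Bool.not
      _ = _ := hsum_ofReal Bool.not
  · have hsplit : ∑ z, ∑ s, π z s s + ∑ z, ∑ s, π z s (!s) = 1 := by
      rw [← hπ_sum, ← Finset.sum_add_distrib]
      simp only [Fintype.sum_bool, Bool.not_true, Bool.not_false]
      exact Finset.sum_congr rfl fun _ _ => by ring
    rw [← ENNReal.ofReal_add (hsum_nonneg (fun s => s)) (hsum_nonneg Bool.not), hsplit]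
    simp

end JointLaw

noncomputable section Specialization

/-- The model's `F_ij` for a worker of type `w` and a task of type `z`. -/
def accuracy {κ : Type*} [DecidableEq κ] (p : ℝ) (w z : κ) : ℝ :=
  if z = w then p else 1/2

def responseProb (q : ℝ) (s : Bool) : ℝ :=
  if s then q else 1 - q

def jointWeight {d : ℕ} (p : ℝ) (wa wb z : Fin d) (sa sb : Bool) : ℝ :=
  1/(d:ℝ) * responseProb (accuracy p wa z) sa * responseProb (accuracy p wb z) sb

theorem responseProb_nonneg {q : ℝ} (hq₀ : 0 ≤ q) (hq₁ : q ≤ 1) (s : Bool) :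
    0 ≤ responseProb q s := by
  cases s
  exacts [sub_nonneg.2 hq₁, hq₀]

theorem sum_responseProb (q : ℝ) : ∑ s, responseProb q s = 1 := by
  simp [responseProb]

theorem responseProb_agree (q r : ℝ) :
    ∑ s, responseProb q s * responseProb r s = 1/2 + (2*q - 1) * (2*r - 1) / 2 := by
  simp only [Fintype.sum_bool, responseProb, if_true, Bool.false_eq_true, if_false]
  ring

theorem accuracy_mem_Icc {κ : Type*} [DecidableEq κ] {p : ℝ} (hp : p ∈ Set.Icc (0 : ℝ) 1)
    (w z : κ) : accuracy p w z ∈ Set.Icc 0 1 := by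
  unfold accuracy
  split_ifs
  exacts [hp, ⟨by norm_num, by norm_num⟩]

theorem two_mul_accuracy_sub_one {κ : Type*} [DecidableEq κ] (p : ℝ) (w z : κ) :
    2 * accuracy p w z - 1 = if z = w then 2*p - 1 else 0 := by
  unfold accuracy
  split_ifs <;> ring

theorem sum_bias_mul_bias {κ : Type*} [Fintype κ] [DecidableEq κ] (p : ℝ) (wa wb : κ) :
    ∑ z, (2 * accuracy p wa z - 1) * (2 * accuracy p wb z - 1) =
      if wa = wb then (2*p - 1)^2 else 0 := by
  simp only [two_mul_accuracy_sub_one]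
  split_ifs with hw
  · subst hw
    simp [sq]
  · refine Finset.sum_eq_zero fun z _ => ?_
    by_cases hz : z = wa
    · simp [hz, hw]
    · simp [hz]

variable {d : ℕ} {p : ℝ}

theorem jointWeight_nonneg (hp : p ∈ Set.Icc (0 : ℝ) 1) (wa wb z : Fin d) (sa sb : Bool) :
    0 ≤ jointWeight p wa wb z sa sb := by
  obtain ⟨ha₀, ha₁⟩ := accuracy_mem_Icc hp wa z
  obtain ⟨hb₀, hb₁⟩ := accuracy_mem_Icc hp wb z
  unfold jointWeight
  have := responseProb_nonneg ha₀ ha₁ sa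
  have := responseProb_nonneg hb₀ hb₁ sb
  positivity

theorem sum_jointWeight (p : ℝ) (wa wb : Fin d) :
    ∑ z, ∑ sa, ∑ sb, jointWeight p wa wb z sa sb = 1 := by
  have hd : (d : ℝ) ≠ 0 := Nat.cast_ne_zero.2 wa.pos.ne'
  simp only [jointWeight, ← Finset.mul_sum, ← Finset.sum_mul, sum_responseProb]
  simp [hd]

theorem sum_jointWeight_diag (p : ℝ) (wa wb : Fin d) :
    ∑ z, ∑ s, jointWeight p wa wb z s s =
      1/2 + if wa = wb then (2*p - 1)^2 / (2*d) else 0 := by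
  have hd : (d : ℝ) ≠ 0 := Nat.cast_ne_zero.2 wa.pos.ne'
  simp only [jointWeight, mul_assoc, ← Finset.mul_sum, responseProb_agree, Finset.sum_add_distrib,
    ← Finset.sum_div, sum_bias_mul_bias]
  split_ifs <;> field_simp <;> simp

end Specialization

theorem stmt_6_general {Ω : Type*} [MeasurableSpace Ω] (μ : Measure Ω) [IsProbabilityMeasure μ]
    (d : ℕ) (p : ℝ) (hp : p ∈ Set.Ioc (1/2 : ℝ) 1)
    (wa wb : Fin d) (ai : ℝ) (hai : ai = 1 ∨ ai = -1)
    (t : Ω → Fin d) (Ma Mb : Ω → ℝ)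
    (hMaval : ∀ ω, Ma ω = ai ∨ Ma ω = -ai) (hMbval : ∀ ω, Mb ω = ai ∨ Mb ω = -ai)
    (hjoint : ∀ (z : Fin d) (sa sb : Bool),
      μ {ω | t ω = z ∧ (Ma ω = ai) = sa ∧ (Mb ω = ai) = sb} =
        ENNReal.ofReal ((1/(d:ℝ)) *
          (if sa then (if z = wa then p else 1/2) else 1 - (if z = wa then p else 1/2)) *
          (if sb then (if z = wb then p else 1/2) else 1 - (if z = wb then p else 1/2)))) :
    (wa = wb → μ {ω | Ma ω = Mb ω} = ENNReal.ofReal (1/2 + (2*p - 1)^2/(2*d))) ∧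
    (wa ≠ wb → μ {ω | Ma ω = Mb ω} = ENNReal.ofReal (1/2)) := by
  have hai_ne : ai ≠ -ai := by rcases hai with rfl | rfl <;> norm_num
  have hagree : {ω | Ma ω = Mb ω} = {ω | Ma ω = ai ↔ Mb ω = ai} := by
    ext ω
    rcases hMaval ω with ha | ha <;> rcases hMbval ω with hb | hb <;>
      simp [ha, hb, hai_ne, hai_ne.symm]
  have hlaw := measure_setOf_iff_eq_sum μ t (Ma · = ai) (Mb · = ai) (jointWeight p wa wb)
    (jointWeight_nonneg ⟨by linarith [hp.1], hp.2⟩ wa wb) (sum_jointWeight p wa wb) hjoint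
  rw [hagree, hlaw, sum_jointWeight_diag]
  exact ⟨fun h => by simp [h], fun h => by simp [h]⟩

/-- in the d-Type Specialization Model, for two distinct workers with fixed types
`wa, wb` and a task with uniformly random type, the probability that the two responses agree is
`1/2 + (2p−1)²/(2d)` when `wa = wb` and `1/2` when `wa ≠ wb`.  The joint law of the task type
and the two (conditionally independent) responses is specified by `hjoint`. -/
theorem stmt_6 {Ω : Type*} [MeasurableSpace Ω] (μ : Measure Ω) [IsProbabilityMeasure μ]
    (d : ℕ) (hd : 1 ≤ d) (p : ℝ) (hp : p ∈ Set.Ioc (1/2 : ℝ) 1)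
    (wa wb : Fin d) (ai : ℝ) (hai : ai = 1 ∨ ai = -1)
    (t : Ω → Fin d) (Ma Mb : Ω → ℝ)
    (hMaval : ∀ ω, Ma ω = ai ∨ Ma ω = -ai) (hMbval : ∀ ω, Mb ω = ai ∨ Mb ω = -ai)
    (hjoint : ∀ (z : Fin d) (sa sb : Bool),
      μ {ω | t ω = z ∧ (Ma ω = ai) = sa ∧ (Mb ω = ai) = sb} =
        ENNReal.ofReal ((1/(d:ℝ)) *
          (if sa then (if z = wa then p else 1/2) else 1 - (if z = wa then p else 1/2)) *
          (if sb then (if z = wb then p else 1/2) else 1 - (if z = wb then p else 1/2)))) :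
    (wa = wb → μ {ω | Ma ω = Mb ω} = ENNReal.ofReal (1/2 + (2*p - 1)^2/(2*d))) ∧
    (wa ≠ wb → μ {ω | Ma ω = Mb ω} = ENNReal.ofReal (1/2)) :=
  stmt_6_general μ d p hp wa wb ai hai t Ma Mb hMaval hMbval hjoint
end

section
/- Consider a single binary task whose true answer a is uniform on {-1,+1}, answered by L workers: independently for each worker j, with probability σ² the worker is a hammer and reports M_j = a, and with probability 1 - σ² the worker is a spammer and reports M_j uniform on {-1,+1} independently of a. Then for every estimator â = g(M_1, …, M_L) ∈ {-1,+1} that is a (measurable) function of the responses alone, P(â ≠ a) ≥ (1/2)·(1 - σ²)^L. -/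
open MeasureTheory ProbabilityTheory

/-- Bayes risk lower bound in the spammer-hammer model.  The true answer `a` is
uniform on `{−1,+1}`; independently each of the `L` workers is a hammer with probability `σ²`
(reporting `a`) and otherwise a spammer (reporting an independent fair coin `U j`).  Every
estimator `g` of `a` from the responses alone errs with probability at least `(1/2)(1−σ²)^L`. -/
theorem stmt_11 {Ω : Type*} [MeasurableSpace Ω] (μ : Measure Ω) [IsProbabilityMeasure μ]
    (L : ℕ) (σ2 : ℝ) (hσ : σ2 ∈ Set.Icc (0:ℝ) 1)
    (a : Ω → ℝ) (H : Fin L → Ω → Bool) (U : Fin L → Ω → ℝ)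
    (ha_meas : Measurable a) (hH_meas : ∀ j, Measurable (H j))
    (hU_meas : ∀ j, Measurable (U j))
    (ha_val : ∀ ω, a ω = 1 ∨ a ω = -1) (hU_val : ∀ j ω, U j ω = 1 ∨ U j ω = -1)
    (ha_dist : μ {ω | a ω = 1} = ENNReal.ofReal (1/2))
    (hHU_dist : ∀ (j : Fin L) (b : Bool) (u : ℝ), u = 1 ∨ u = -1 →
      μ {ω | H j ω = b ∧ U j ω = u} =
        ENNReal.ofReal ((if b then σ2 else 1 - σ2) * (1/2)))
    (hindepHU : iIndepFun (fun j ω => (H j ω, U j ω)) μ)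
    (hindepA : IndepFun a (fun ω => fun j => (H j ω, U j ω)) μ)
    (g : (Fin L → ℝ) → ℝ) (hg_meas : Measurable g) (hg_val : ∀ v, g v = 1 ∨ g v = -1) :
    (1/2) * (1 - σ2)^L ≤
      (μ {ω | g (fun j => if H j ω then a ω else U j ω) ≠ a ω}).toReal := by
  obtain ⟨hσ0, hσ1⟩ := hσ
  have h1σ : (0:ℝ) ≤ 1 - σ2 := by linarith
  set W : Ω → Fin L → Bool × ℝ := fun ω => fun j => (H j ω, U j ω) with hW
  have hW_meas : Measurable W :=
    measurable_pi_lambda _ fun j => (hH_meas j).prodMk (hU_meas j)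
  -- measure that worker j is a spammer
  have hEj : ∀ j : Fin L, μ {ω | H j ω = false} = ENNReal.ofReal (1 - σ2) := by
    intro j
    have hsplit : {ω | H j ω = false} =
        {ω | H j ω = false ∧ U j ω = 1} ∪ {ω | H j ω = false ∧ U j ω = (-1:ℝ)} := by
      ext ω
      simp only [Set.mem_setOf_eq, Set.mem_union]
      constructor
      · intro h
        rcases hU_val j ω with hu | hu
        · exact Or.inl ⟨h, hu⟩
        · exact Or.inr ⟨h, hu⟩
      · rintro (⟨h, _⟩ | ⟨h, _⟩) <;> exact h
    have hdisj : Disjoint {ω | H j ω = false ∧ U j ω = 1}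
        {ω | H j ω = false ∧ U j ω = (-1:ℝ)} := by
      rw [Set.disjoint_left]
      rintro ω ⟨_, h1⟩ ⟨_, h2⟩
      rw [h1] at h2; norm_num at h2
    have hm2 : MeasurableSet {ω | H j ω = false ∧ U j ω = (-1:ℝ)} := by
      have : {ω | H j ω = false ∧ U j ω = (-1:ℝ)} =
          (H j) ⁻¹' {false} ∩ (U j) ⁻¹' {-1} := rfl
      rw [this]
      exact ((hH_meas j) (measurableSet_singleton _)).inter
        ((hU_meas j) (measurableSet_singleton _))
    rw [hsplit, measure_union hdisj hm2,
      hHU_dist j false 1 (Or.inl rfl), hHU_dist j false (-1) (Or.inr rfl)]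
    simp only [Bool.false_eq_true, if_false]
    rw [← ENNReal.ofReal_add (by positivity) (by positivity)]
    ring_nf
  -- measure that all workers are spammers
  have hE : μ {ω | ∀ j, H j ω = false} = ENNReal.ofReal ((1 - σ2)^L) := by
    have hinter : {ω | ∀ j, H j ω = false} =
        ⋂ j, (fun ω => (H j ω, U j ω)) ⁻¹' ({false} ×ˢ (Set.univ : Set ℝ)) := by
      ext ω; simp [Set.mem_prod]
    rw [hinter, hindepHU.meas_iInter (fun j =>
      ⟨{false} ×ˢ (Set.univ : Set ℝ),
        (measurableSet_singleton _).prod MeasurableSet.univ, rfl⟩)]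
    have : ∀ j : Fin L, μ ((fun ω => (H j ω, U j ω)) ⁻¹' ({false} ×ˢ (Set.univ : Set ℝ)))
        = ENNReal.ofReal (1 - σ2) := by
      intro j
      have : (fun ω => (H j ω, U j ω)) ⁻¹' ({false} ×ˢ (Set.univ : Set ℝ))
          = {ω | H j ω = false} := by ext ω; simp [Set.mem_prod]
      rw [this]; exact hEj j
    rw [Finset.prod_congr rfl (fun j _ => this j)]
    simp [ENNReal.ofReal_pow h1σ]
  -- the sets where all workers spam and g outputs c
  set T : ℝ → Set (Fin L → Bool × ℝ) := fun c =>
    {w | (∀ j, (w j).1 = false) ∧ g (fun j => (w j).2) = c} with hT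
  have hT_meas : ∀ c, MeasurableSet (T c) := by
    intro c
    have h1 : MeasurableSet {w : Fin L → Bool × ℝ | ∀ j, (w j).1 = false} := by
      have : {w : Fin L → Bool × ℝ | ∀ j, (w j).1 = false} =
          ⋂ j, (fun w : Fin L → Bool × ℝ => (w j).1) ⁻¹' {false} := by ext w; simp
      rw [this]
      exact MeasurableSet.iInter fun j =>
        ((measurable_fst.comp (measurable_pi_apply j)) (measurableSet_singleton _))
    have h2 : MeasurableSet {w : Fin L → Bool × ℝ | g (fun j => (w j).2) = c} := by
      have hm : Measurable fun w : Fin L → Bool × ℝ => g (fun j => (w j).2) :=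
        hg_meas.comp (measurable_pi_lambda _ fun j =>
          measurable_snd.comp (measurable_pi_apply j))
      exact hm (measurableSet_singleton _)
    exact h1.inter h2
  -- μ {a = -1} = 1/2
  have ha_neg : μ {ω | a ω = (-1:ℝ)} = ENNReal.ofReal (1/2) := by
    have hc : {ω | a ω = (-1:ℝ)} = {ω | a ω = 1}ᶜ := by
      ext ω
      simp only [Set.mem_setOf_eq, Set.mem_compl_iff]
      constructor
      · intro h h1; rw [h1] at h; norm_num at h
      · intro h; rcases ha_val ω with h1 | h1
        · exact absurd h1 h
        · exact h1
    have hma : MeasurableSet {ω | a ω = (1:ℝ)} := ha_meas (measurableSet_singleton _)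
    rw [hc, measure_compl hma (measure_ne_top μ _), ha_dist, measure_univ]
    rw [← ENNReal.ofReal_one, ← ENNReal.ofReal_sub _ (by norm_num)]
    norm_num
  -- split of spammer event by the value of g
  have hsplitT : μ (W ⁻¹' T (-1)) + μ (W ⁻¹' T 1) = ENNReal.ofReal ((1 - σ2)^L) := by
    have hu : W ⁻¹' T (-1) ∪ W ⁻¹' T 1 = {ω | ∀ j, H j ω = false} := by
      ext ω
      simp only [Set.mem_union, Set.mem_preimage, hT, Set.mem_setOf_eq, hW]
      constructor
      · rintro (⟨h, _⟩ | ⟨h, _⟩) <;> exact h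
      · intro h
        rcases hg_val (fun j => U j ω) with hg1 | hg1
        · exact Or.inr ⟨h, hg1⟩
        · exact Or.inl ⟨h, hg1⟩
    have hdisj : Disjoint (W ⁻¹' T (-1)) (W ⁻¹' T 1) := by
      rw [Set.disjoint_left]
      rintro ω ⟨_, h1⟩ ⟨_, h2⟩
      rw [h1] at h2; norm_num at h2
    rw [← measure_union hdisj (hW_meas (hT_meas 1)), hu, hE]
  -- the two error events
  have hsub1 : (a ⁻¹' {1}) ∩ (W ⁻¹' T (-1)) ⊆
      {ω | g (fun j => if H j ω then a ω else U j ω) ≠ a ω} := by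
    rintro ω ⟨ha1, hfalse, hgv⟩
    simp only [Set.mem_preimage, Set.mem_singleton_iff] at ha1
    have hg' : g (fun j => U j ω) = -1 := hgv
    have : (fun j => if H j ω then a ω else U j ω) = fun j => U j ω := by
      funext j
      have hf : H j ω = false := hfalse j
      rw [hf]; simp
    simp only [Set.mem_setOf_eq, this]
    rw [hg', ha1]; norm_num
  have hsub2 : (a ⁻¹' {-1}) ∩ (W ⁻¹' T 1) ⊆
      {ω | g (fun j => if H j ω then a ω else U j ω) ≠ a ω} := by
    rintro ω ⟨ha1, hfalse, hgv⟩
    simp only [Set.mem_preimage, Set.mem_singleton_iff] at ha1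
    have hg' : g (fun j => U j ω) = 1 := hgv
    have : (fun j => if H j ω then a ω else U j ω) = fun j => U j ω := by
      funext j
      have hf : H j ω = false := hfalse j
      rw [hf]; simp
    simp only [Set.mem_setOf_eq, this]
    rw [hg', ha1]; norm_num
  have hdisj12 : Disjoint ((a ⁻¹' {1}) ∩ (W ⁻¹' T (-1)))
      ((a ⁻¹' {-1}) ∩ (W ⁻¹' T 1)) := by
    rw [Set.disjoint_left]
    rintro ω ⟨h1, _⟩ ⟨h2, _⟩
    simp only [Set.mem_preimage, Set.mem_singleton_iff] at h1 h2
    rw [h1] at h2; norm_num at h2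
  have hkey : ENNReal.ofReal ((1/2) * (1 - σ2)^L) ≤
      μ {ω | g (fun j => if H j ω then a ω else U j ω) ≠ a ω} := by
    have hm1 : MeasurableSet ((a ⁻¹' {-1}) ∩ (W ⁻¹' T 1)) :=
      (ha_meas (measurableSet_singleton _)).inter (hW_meas (hT_meas 1))
    calc ENNReal.ofReal ((1/2) * (1 - σ2)^L)
        = ENNReal.ofReal (1/2) * ENNReal.ofReal ((1 - σ2)^L) := by
          rw [← ENNReal.ofReal_mul (by norm_num)]
      _ = ENNReal.ofReal (1/2) * (μ (W ⁻¹' T (-1)) + μ (W ⁻¹' T 1)) := by rw [hsplitT]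
      _ = ENNReal.ofReal (1/2) * μ (W ⁻¹' T (-1))
          + ENNReal.ofReal (1/2) * μ (W ⁻¹' T 1) := by rw [mul_add]
      _ = μ ((a ⁻¹' {1}) ∩ (W ⁻¹' T (-1))) + μ ((a ⁻¹' {-1}) ∩ (W ⁻¹' T 1)) := by
          rw [hindepA.measure_inter_preimage_eq_mul _ _ (measurableSet_singleton _) (hT_meas (-1)),
            hindepA.measure_inter_preimage_eq_mul _ _ (measurableSet_singleton _) (hT_meas 1)]
          have e1 : a ⁻¹' {(1:ℝ)} = {ω | a ω = 1} := rfl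
          have e2 : a ⁻¹' {(-1:ℝ)} = {ω | a ω = (-1:ℝ)} := rfl
          rw [e1, e2, ha_dist, ha_neg]
      _ = μ (((a ⁻¹' {1}) ∩ (W ⁻¹' T (-1))) ∪ ((a ⁻¹' {-1}) ∩ (W ⁻¹' T 1))) := by
          rw [measure_union hdisj12 hm1]
      _ ≤ μ {ω | g (fun j => if H j ω then a ω else U j ω) ≠ a ω} :=
          measure_mono (Set.union_subset hsub1 hsub2)
  calc (1/2) * (1 - σ2)^L
      = (ENNReal.ofReal ((1/2) * (1 - σ2)^L)).toReal := by
        rw [ENNReal.toReal_ofReal (by positivity)]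
    _ ≤ (μ {ω | g (fun j => if H j ω then a ω else U j ω) ≠ a ω}).toReal :=
        ENNReal.toReal_mono (measure_ne_top μ _) hkey
end

section
/- Fix α ∈ (0,1), β ∈ (0,1), and σ² ∈ (0,1), and define the intervals I₁ = [0, αβ], I₂ = [αβ, β], I₃ = [β, 1 - σ²(1-β)], I₄ = [1 - σ²(1-β), 1], the function f: [0,1]² → {-1,0,1} by f(x,y) = sign(αβ - x) if x ∈ I₁ ∪ I₂ and y ∈ I₄, f(x,y) = sign(αβ - y) if x ∈ I₄ and y ∈ I₁ ∪ I₂, and f(x,y) = 0 otherwise, and the functions q₁, q₂: [0,1] → ℝ by q₁(θ) = sign(αβ - θ)/√(2β) for θ ∈ I₁ ∪ I₂, q₁(θ) = 0 for θ ∈ I₃, q₁(θ) = 1/√(2σ²(1-β)) for θ ∈ I₄, and q₂(θ) = q₁(θ) for θ ∈ I₁ ∪ I₂ ∪ I₃ and q₂(θ) = -1/√(2σ²(1-β)) for θ ∈ I₄. Then ∫₀¹ q₁(θ)² dθ = ∫₀¹ q₂(θ)² dθ = 1, ∫₀¹ q₁(θ)q₂(θ) dθ = 0, and for (almost) all x,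 y ∈ [0,1], f(x,y) = λ₁·q₁(x)q₁(y) + λ₂·q₂(x)q₂(y), where λ₁ = √(σ²β(1-β)) and λ₂ = -√(σ²β(1-β)). -/
/-!
On `[0, 1]` both `q₁` and `q₂` are step functions: `sign (αβ - θ) / √(2β)` on `[0, β]`, zero on
`(β, c)` and `±1/√(2σ²(1-β))` on `[c, 1]`, where `c = 1 - σ²(1-β)`. Away from the null point
`θ = αβ` the square of the sign is `1`, so every integral reduces to the lengths `β` and
`σ²(1-β)` of the two blocks. In `λ (q₁ ⊗ q₁ - q₂ ⊗ q₂)` the diagonal blocks cancel and the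
off-diagonal blocks double, and `2λ = √(2β) √(2σ²(1-β))` makes the result exactly `f`.
-/

open MeasureTheory Set

noncomputable def blockFn (β c : ℝ) (g : ℝ → ℝ) (e θ : ℝ) : ℝ :=
  if θ ≤ β then g θ else if θ < c then 0 else e

noncomputable def blockKernel (β c : ℝ) (s : ℝ → ℝ) (x y : ℝ) : ℝ :=
  if x ≤ β ∧ c ≤ y then s x else if c ≤ x ∧ y ≤ β then s y else 0

section
variable {β c : ℝ}

lemma blockFn_mul_blockFn (g g' : ℝ → ℝ) (e e' θ : ℝ) :
    blockFn β c g e θ * blockFn β c g' e' θ = blockFn β c (fun θ => g θ * g' θ) (e * e') θ := by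
  unfold blockFn; split_ifs <;> simp

lemma blockFn_eq_indicator (hβc : β < c) (g : ℝ → ℝ) (e : ℝ) :
    blockFn β c g e = (Iic β).indicator g + (Ici c).indicator fun _ => e := by
  ext θ
  simp only [blockFn, Pi.add_apply, indicator, mem_Iic, mem_Ici]
  split_ifs <;> simp <;> linarith

lemma setIntegral_Icc_blockFn (hβ : 0 ≤ β) (hβc : β < c) (hc : c ≤ 1) {g : ℝ → ℝ} {d : ℝ}
    (hg : ∀ᵐ θ, g θ = d) (e : ℝ) :
    ∫ θ in Icc 0 1, blockFn β c g e θ = β * d + (1 - c) * e := by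
  have hIic : ∫ θ in Icc 0 1, (Iic β).indicator g θ = β * d := by
    have hI : Icc (0:ℝ) 1 ∩ Iic β = Icc 0 β := by
      ext θ; simp only [mem_inter_iff, mem_Icc, mem_Iic]; grind
    rw [setIntegral_indicator measurableSet_Iic, hI, setIntegral_congr_ae measurableSet_Icc
        (hg.mono fun θ h _ => h), setIntegral_const, Real.volume_real_Icc_of_le hβ, sub_zero,
      smul_eq_mul]
  have hIci : ∫ θ in Icc 0 1, (Ici c).indicator (fun _ => e) θ = (1 - c) * e := by
    have hI : Icc (0:ℝ) 1 ∩ Ici c = Icc c 1 := by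
      ext θ; simp only [mem_inter_iff, mem_Icc, mem_Ici]; grind
    rw [setIntegral_indicator measurableSet_Ici, hI, setIntegral_const,
      Real.volume_real_Icc_of_le hc, smul_eq_mul]
  rw [blockFn_eq_indicator hβc, ← hIic, ← hIci]
  have hg_int : IntegrableOn g (Icc 0 1) :=
    (integrable_const d).congr (ae_restrict_of_ae (hg.mono fun _ h => h.symm))
  exact integral_add
    ((integrable_indicator_iff measurableSet_Iic).mpr (Integrable.restrict hg_int))
    ((integrable_indicator_iff measurableSet_Ici).mpr (integrable_const e))

lemma setIntegral_Icc_blockFn_mul (hβ : 0 ≤ β) (hβc : β < c) (hc : c ≤ 1) {g : ℝ → ℝ} {d : ℝ}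
    (hg : ∀ᵐ θ, g θ * g θ = d) (e e' : ℝ) :
    ∫ θ in Icc 0 1, blockFn β c g e θ * blockFn β c g e' θ = β * d + (1 - c) * (e * e') := by
  simp_rw [blockFn_mul_blockFn]
  exact setIntegral_Icc_blockFn hβ hβc hc hg _

end

lemma ae_sign_sub_div_mul_self (a r : ℝ) :
    ∀ᵐ θ : ℝ, Real.sign (a - θ) / r * (Real.sign (a - θ) / r) = (r ^ 2)⁻¹ := by
  filter_upwards [volume.ae_ne a] with θ hθ
  rcases Real.sign_apply_eq_of_ne_zero (a - θ) (sub_ne_zero.mpr hθ.symm) with h | h <;>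
    · rw [h]; ring

lemma blockKernel_eq_rank_two {β c : ℝ} (hβc : β < c) (s : ℝ → ℝ) {r t lam : ℝ}
    (hr : r ≠ 0) (ht : t ≠ 0) (hrt : r * t = 2 * lam) (x y : ℝ) :
    blockKernel β c s x y =
      lam * (blockFn β c (fun θ => s θ / r) (1 / t) x * blockFn β c (fun θ => s θ / r) (1 / t) y)
        + (-lam) * (blockFn β c (fun θ => s θ / r) (-(1 / t)) x *
          blockFn β c (fun θ => s θ / r) (-(1 / t)) y) := by
  unfold blockKernel blockFn
  split_ifs <;> first | ring1 | (exfalso; grind) | (field_simp; linear_combination s _ * hrt)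

theorem stmt_14_general (α β σ2 : ℝ) (hβ : β ∈ Set.Ioo (0:ℝ) 1)
    (hσ : σ2 ∈ Set.Ioo (0:ℝ) 1) :
    let q1 : ℝ → ℝ := fun θ =>
      if θ ≤ β then Real.sign (α*β - θ) / Real.sqrt (2*β)
      else if θ < 1 - σ2*(1-β) then 0
      else 1 / Real.sqrt (2*σ2*(1-β))
    let q2 : ℝ → ℝ := fun θ =>
      if θ ≤ β then Real.sign (α*β - θ) / Real.sqrt (2*β)
      else if θ < 1 - σ2*(1-β) then 0
      else -(1 / Real.sqrt (2*σ2*(1-β)))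
    let f : ℝ → ℝ → ℝ := fun x y =>
      if x ≤ β ∧ 1 - σ2*(1-β) ≤ y then Real.sign (α*β - x)
      else if 1 - σ2*(1-β) ≤ x ∧ y ≤ β then Real.sign (α*β - y)
      else 0
    (∫ θ in Set.Icc (0:ℝ) 1, (q1 θ)^2) = 1 ∧
    (∫ θ in Set.Icc (0:ℝ) 1, (q2 θ)^2) = 1 ∧
    (∫ θ in Set.Icc (0:ℝ) 1, q1 θ * q2 θ) = 0 ∧
    (∀ x ∈ Set.Icc (0:ℝ) 1, ∀ y ∈ Set.Icc (0:ℝ) 1,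
      f x y = Real.sqrt (σ2*β*(1-β)) * (q1 x * q1 y)
        + (- Real.sqrt (σ2*β*(1-β))) * (q2 x * q2 y)) := by
  intro q1 q2 f
  obtain ⟨hβ0, hβ1⟩ := hβ
  obtain ⟨hσ0, hσ1⟩ := hσ
  set c := 1 - σ2 * (1 - β)
  set g : ℝ → ℝ := fun θ => Real.sign (α * β - θ) / Real.sqrt (2 * β)
  have hβc : β < c := by nlinarith
  have hc1 : c ≤ 1 := by nlinarith
  have h2β : 0 < 2 * β := by linarith
  have hτ : 0 < 2 * σ2 * (1 - β) := by nlinarith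
  have hsqrt : Real.sqrt (2 * β) * Real.sqrt (2 * σ2 * (1 - β))
      = 2 * Real.sqrt (σ2 * β * (1 - β)) := by
    rw [← Real.sqrt_mul h2β.le,
      show 2 * β * (2 * σ2 * (1 - β)) = 2 ^ 2 * (σ2 * β * (1 - β)) by ring,
      Real.sqrt_mul (by positivity), Real.sqrt_sq zero_le_two]
  have hg : ∀ᵐ θ, g θ * g θ = (2 * β)⁻¹ := by
    simpa only [Real.sq_sqrt h2β.le] using ae_sign_sub_div_mul_self (α * β) (Real.sqrt (2 * β))
  have hinner : ∀ e e', ∫ θ in Icc 0 1, blockFn β c g e θ * blockFn β c g e' θ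
      = 1 / 2 + σ2 * (1 - β) * (e * e') := by
    intro e e'
    rw [setIntegral_Icc_blockFn_mul hβ0.le hβc hc1 hg]
    field_simp
    ring
  have hb : σ2 * (1 - β) *
      (1 / Real.sqrt (2 * σ2 * (1 - β)) * (1 / Real.sqrt (2 * σ2 * (1 - β)))) = 1 / 2 := by
    rw [one_div_mul_one_div, Real.mul_self_sqrt hτ.le]
    field_simp
  refine ⟨?_, ?_, ?_, fun x _ y _ => blockKernel_eq_rank_two hβc (fun θ => Real.sign (α * β - θ))
    (Real.sqrt_pos.2 h2β).ne' (Real.sqrt_pos.2 hτ).ne' hsqrt x y⟩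
  · change ∫ θ in Icc 0 1, blockFn β c g (1 / Real.sqrt (2 * σ2 * (1 - β))) θ ^ 2 = 1
    simp_rw [sq]
    rw [hinner, hb]
    norm_num
  · change ∫ θ in Icc 0 1, blockFn β c g (-(1 / Real.sqrt (2 * σ2 * (1 - β)))) θ ^ 2 = 1
    simp_rw [sq]
    rw [hinner, neg_mul_neg, hb]
    norm_num
  · change ∫ θ in Icc 0 1, blockFn β c g (1 / Real.sqrt (2 * σ2 * (1 - β))) θ *
      blockFn β c g (-(1 / Real.sqrt (2 * σ2 * (1 - β)))) θ = 0
    rw [hinner, mul_neg, mul_neg, hb]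
    norm_num

/-- the graphon latent function constructed from the spammer-hammer model has a
rank-two spectral decomposition with eigenvalues `±√(σ²β(1−β))` and the stated orthonormal
eigenfunctions `q₁, q₂`.  Here `I₁ ∪ I₂ = [0, β]`, `I₃ = [β, 1 − σ²(1−β)]`,
`I₄ = [1 − σ²(1−β), 1]`. -/
theorem stmt_14 (α β σ2 : ℝ) (hα : α ∈ Set.Ioo (0:ℝ) 1) (hβ : β ∈ Set.Ioo (0:ℝ) 1)
    (hσ : σ2 ∈ Set.Ioo (0:ℝ) 1) :
    let q1 : ℝ → ℝ := fun θ =>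
      if θ ≤ β then Real.sign (α*β - θ) / Real.sqrt (2*β)
      else if θ < 1 - σ2*(1-β) then 0
      else 1 / Real.sqrt (2*σ2*(1-β))
    let q2 : ℝ → ℝ := fun θ =>
      if θ ≤ β then Real.sign (α*β - θ) / Real.sqrt (2*β)
      else if θ < 1 - σ2*(1-β) then 0
      else -(1 / Real.sqrt (2*σ2*(1-β)))
    let f : ℝ → ℝ → ℝ := fun x y =>
      if x ≤ β ∧ 1 - σ2*(1-β) ≤ y then Real.sign (α*β - x)
      else if 1 - σ2*(1-β) ≤ x ∧ y ≤ β then Real.sign (α*β - y)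
      else 0
    (∫ θ in Set.Icc (0:ℝ) 1, (q1 θ)^2) = 1 ∧
    (∫ θ in Set.Icc (0:ℝ) 1, (q2 θ)^2) = 1 ∧
    (∫ θ in Set.Icc (0:ℝ) 1, q1 θ * q2 θ) = 0 ∧
    (∀ x ∈ Set.Icc (0:ℝ) 1, ∀ y ∈ Set.Icc (0:ℝ) 1,
      f x y = Real.sqrt (σ2*β*(1-β)) * (q1 x * q1 y)
        + (- Real.sqrt (σ2*β*(1-β))) * (q2 x * q2 y)) :=
  stmt_14_general α β σ2 hβ hσ
end

section
/- Let a ∈ {-1,+1} and let m, m̂ ∈ ℝ^W be such that for every j, m_j = a·c_j for some c_j > 0. Let c_max = max_j c_j and c_min = min_j c_j. If |m̂_j - m_j| < (1/2)·(c_max + c_min) for every j, then for any index j* ∈ argmax_j |m̂_j| one has m̂_{j*} ≠ 0 and sign(m̂_{j*}) = a. -/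
/-!
Multiplying by `a = ±1` reduces everything to the case `a = 1`, `m = c`.
Choose `j₀` with `c j₀ = c_max`. Its estimate has magnitude above `c_max - (c_max + c_min)/2
= (c_max - c_min)/2`, hence so does the maximizer `j*`. On the other hand `a · m̂_{j*}` exceeds
`c_min - (c_max + c_min)/2 = -(c_max - c_min)/2`, so it cannot be nonpositive: its magnitude would
then be below `(c_max - c_min)/2`.
-/

open Finset

theorem pos_of_abs_le_of_abs_sub_lt {ι : Type*} {s : Finset ι} (hs : s.Nonempty) {x c : ι → ℝ}
    (herr : ∀ j ∈ s, |x j - c j| < (s.sup' hs c + s.inf' hs c) / 2)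
    {i : ι} (hi : i ∈ s) (hmax : ∀ j ∈ s, |x j| ≤ |x i|) : 0 < x i := by
  obtain ⟨j₀, hj₀, hc_max⟩ := exists_mem_eq_sup' hs c
  have hc_min : s.inf' hs c ≤ c i := inf'_le c hi
  have hlarge : (s.sup' hs c - s.inf' hs c) / 2 < |x i| := by
    have := abs_sub_abs_le_abs_sub (c j₀) (x j₀)
    rw [abs_sub_comm] at this
    linarith [herr j₀ hj₀, hmax j₀ hj₀, le_abs_self (c j₀)]
  have hlower : -((s.sup' hs c - s.inf' hs c) / 2) < x i := by
    linarith [neg_abs_le (x i - c i), herr i hi]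
  by_contra! hnonpos
  rw [abs_of_nonpos hnonpos] at hlarge
  linarith

theorem Real.sign_eq_of_mul_pos {a y : ℝ} (ha : a = 1 ∨ a = -1) (h : 0 < a * y) :
    Real.sign y = a := by
  rcases ha with rfl | rfl
  · exact Real.sign_of_pos (by linarith)
  · exact Real.sign_of_neg (by linarith)

theorem stmt_16_general (W : ℕ) (a : ℝ) (ha : a = 1 ∨ a = -1)
    (m mhat c : Fin W → ℝ) (hm : ∀ j, m j = a * c j)
    (hne : (Finset.univ : Finset (Fin W)).Nonempty)
    (herr : ∀ j, |mhat j - m j| <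
      (1/2) * (Finset.univ.sup' hne c + Finset.univ.inf' hne c))
    (jstar : Fin W) (hjstar : ∀ j, |mhat j| ≤ |mhat jstar|) :
    mhat jstar ≠ 0 ∧ Real.sign (mhat jstar) = a := by
  have habs : |a| = 1 := by rcases ha with rfl | rfl <;> simp
  have hsq : a * a = 1 := by rcases ha with rfl | rfl <;> norm_num
  have hpos : 0 < a * mhat jstar := by
    refine pos_of_abs_le_of_abs_sub_lt (x := fun j => a * mhat j) (c := c) hne
      (fun j _ => ?_) (mem_univ jstar) (fun j _ => ?_)
    · have hdiff : a * mhat j - c j = a * (mhat j - m j) := by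
        rw [hm]; linear_combination c j * hsq
      rw [hdiff, abs_mul, habs, one_mul]
      linarith [herr j]
    · simpa only [abs_mul, habs, one_mul] using hjstar j
  exact ⟨fun h0 => by simp [h0] at hpos, Real.sign_eq_of_mul_pos ha hpos⟩

/-- deterministic guarantee for the max-magnitude-entry estimator.
If `m j = a * c j` with `c j > 0`, and the entrywise error of `m̂` is strictly below
`(c_max + c_min)/2`, then any index maximizing `|m̂ j|` has `m̂ j ≠ 0` and `sign(m̂ j) = a`. -/
theorem stmt_16 (W : ℕ) (hW : 0 < W) (a : ℝ) (ha : a = 1 ∨ a = -1)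
    (m mhat c : Fin W → ℝ) (hc : ∀ j, 0 < c j) (hm : ∀ j, m j = a * c j)
    (hne : (Finset.univ : Finset (Fin W)).Nonempty)
    (herr : ∀ j, |mhat j - m j| <
      (1/2) * (Finset.univ.sup' hne c + Finset.univ.inf' hne c))
    (jstar : Fin W) (hjstar : ∀ j, |mhat j| ≤ |mhat jstar|) :
    mhat jstar ≠ 0 ∧ Real.sign (mhat jstar) = a :=
  stmt_16_general W a ha m mhat c hm hne herr jstar hjstar
end
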